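/- Let A = kQ/I be a bound quiver algebra. Then A is a UMP algebra if and only if A_N = kQ_N/I_N is a UMP algebra for every weakly connected component N of the ramifications graph G_{Q,I}. -/

import Mathlib

/-! Unless `Q` is cyclic (where `ω` is constant), an arrow `b` on a longest path `p` of `Φ_a`
has `ω_b = p`: splicing `p` with a longest path of `Φ_b` at `b` shows that neither extends beyond
the other on either side. Now let `t x = s y` with the junction `x y` not in `I`. As interior
vertices of `ω_x` have a single outgoing arrow, `y` follows `x` on `ω_x` unless `x` ends `ω_x`;
dually `x` precedes `y` on `ω_y` unless `y` starts `ω_y`. So either `ω_x = ω_y` or `ω_x → ω_y`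
is an edge of `G_{Q,I}`. Hence all arrows of a path outside `I` lie in one component `N`, and a
path is maximal in `A_N` iff it is maximal in `A`: an arrow prolonging it either lies in `N` or
makes a zero junction. -/

namespace UMPPaper

variable {V A : Type}

/-- A (non-trivial) path in the quiver with source/target maps `s`, `t`,
represented as a nonempty list of composable arrows. -/
def IsPath (s t : A → V) (p : List A) : Prop :=
  p ≠ [] ∧ p.Chain' (fun a b => t a = s b)

/-- `Q` is a cyclic quiver: there is a repetition-free path through all arrows
(and all vertices) whose target equals its source. -/
def IsCyclicQuiver (s t : A → V) : Prop :=
  ∃ p : List A, IsPath s t p ∧ p.Nodup ∧ (∀ a : A, a ∈ p) ∧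
    (∀ v : V, ∃ a ∈ p, s a = v ∨ t a = v) ∧
    (∃ x ∈ p.getLast?, ∃ y ∈ p.head?, t x = s y)

/-- `Φ_a`: paths containing the arrow `a` as a subpath, all of whose
intermediate vertices have exactly one incoming and exactly one outgoing arrow. -/
def Phi (s t : A → V) (a : A) : Set (List A) :=
  {p | IsPath s t p ∧ [a] <:+: p ∧
    ∀ x ∈ p.dropLast, (∃! b : A, s b = t x) ∧ (∃! b : A, t b = t x)}

/-- Specification of the assignment `a ↦ ω_a`. -/
def OmegaSpec (s t : A → V) (ω : A → List A) : Prop :=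
  (IsCyclicQuiver s t → ∃ p : List A, IsPath s t p ∧ p.Nodup ∧ (∀ a : A, a ∈ p) ∧
      (∃ x ∈ p.getLast?, ∃ y ∈ p.head?, t x = s y) ∧ ∀ a : A, ω a = p) ∧
  (¬ IsCyclicQuiver s t →
    ∀ a : A, ω a ∈ Phi s t a ∧ ∀ q ∈ Phi s t a, q.length ≤ (ω a).length)

/-- The quiver is connected (as an undirected graph on vertices). -/
def QConnected (s t : A → V) : Prop :=
  ∀ u v : V, Relation.ReflTransGen
    (fun x y => ∃ a : A, (s a = x ∧ t a = y) ∨ (s a = y ∧ t a = x)) u v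

/-! ## Bound quiver algebras: the ideal `I` is abstracted by the set `Zi` of paths lying in it. -/

/-- The set of paths lying in a (two-sided) ideal is closed under taking super-paths. -/
def ZeroClosed (Zi : List A → Prop) : Prop :=
  ∀ p q : List A, Zi p → p <:+: q → Zi q

/-- Path-level content of admissibility: `I ⊆ R², Rᵐ ⊆ I` for some `m ≥ 2`. -/
def Admissible (s t : A → V) (Zi : List A → Prop) : Prop :=
  (∀ p : List A, Zi p → 2 ≤ p.length) ∧
  ∃ m : ℕ, 2 ≤ m ∧ ∀ p : List A, IsPath s t p → m ≤ p.length → Zi p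

/-- `t(p) = s(q)` and the junction (last arrow of `p`)·(first arrow of `q`) is not in `I`. -/
def JunctionOK (s t : A → V) (Zi : List A → Prop) (p q : List A) : Prop :=
  ∃ x ∈ p.getLast?, ∃ y ∈ q.head?, t x = s y ∧ ¬ Zi [x, y]

/-- Directed edge of the ramifications graph, on path-vertices. -/
def REdgeP (s t : A → V) (Zi : List A → Prop) (p q : List A) : Prop :=
  p ≠ q ∧ JunctionOK s t Zi p q

/-- Directed edge `ω_a → ω_b` of the ramifications graph `G_{Q,I}`. -/
def REdge (s t : A → V) (Zi : List A → Prop) (ω : A → List A) (a b : A) : Prop :=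
  REdgeP s t Zi (ω a) (ω b)

/-- Undirected adjacency (including equality of vertices) used for weak connectivity. -/
def RAdj (s t : A → V) (Zi : List A → Prop) (ω : A → List A) (a b : A) : Prop :=
  ω a = ω b ∨ REdge s t Zi ω a b ∨ REdge s t Zi ω b a

/-- `a` and `b` lie in the same weakly connected component of `G_{Q,I}`. -/
def SameComp (s t : A → V) (Zi : List A → Prop) (ω : A → List A) (a b : A) : Prop :=
  Relation.ReflTransGen (RAdj s t Zi ω) a b

/-- `N` (a set of arrows) is (the arrow set `(Q_N)₁` of) a weakly connected
component of the ramifications graph `G_{Q,I}`. -/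
def IsComp (s t : A → V) (Zi : List A → Prop) (ω : A → List A) (N : Set A) : Prop :=
  ∃ a : A, N = {b | SameComp s t Zi ω a b}

/-- A path of the subquiver `Q_N`. -/
def PathIn (s t : A → V) (N : Set A) (p : List A) : Prop :=
  IsPath s t p ∧ ∀ x ∈ p, x ∈ N

/-- `m` is (a representative of) a maximal path of `A_N = kQ_N/I_N`
(for `N = Set.univ` this is a maximal path of `A = kQ/I`). -/
def MaxPathIn (s t : A → V) (Zi : List A → Prop) (N : Set A) (m : List A) : Prop :=
  PathIn s t N m ∧ ¬ Zi m ∧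
  (∀ α ∈ N, (∃ x ∈ m.getLast?, t x = s α) → Zi (m ++ [α])) ∧
  (∀ α ∈ N, (∃ x ∈ m.head?, t α = s x) → Zi (α :: m))

/-- `A_N` is a UMP algebra: any two non-disjoint maximal paths coincide. -/
def UMPin (s t : A → V) (Zi : List A → Prop) (N : Set A) : Prop :=
  ∀ m m' : List A, MaxPathIn s t Zi N m → MaxPathIn s t Zi N m' →
    (∃ a, a ∈ m ∧ a ∈ m') → m = m'

/-- `A = kQ/I` is special multiserial: every arrow has at most one right and at
most one left arrow-extension outside `I`. -/
def SpecialMultiserial (s t : A → V) (Zi : List A → Prop) : Prop :=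
  ∀ α β γ : A,
    ((t α = s β ∧ ¬ Zi [α, β]) → (t α = s γ ∧ ¬ Zi [α, γ]) → β = γ) ∧
    ((t β = s α ∧ ¬ Zi [β, α]) → (t γ = s α ∧ ¬ Zi [γ, α]) → β = γ)

/-- `ws = [ω_0, …, ω_n]` is the enumeration of the vertices of the component `N`
in edge order; `ω(N) = ws.flatten`. -/
def CompEnum (s t : A → V) (Zi : List A → Prop) (ω : A → List A)
    (N : Set A) (ws : List (List A)) : Prop :=
  ws ≠ [] ∧ ws.Nodup ∧ (∀ p, p ∈ ws ↔ ∃ a ∈ N, ω a = p) ∧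
  ws.Chain' (fun p q => JunctionOK s t Zi p q) ∧ IsPath s t ws.flatten

/-- `W^{(l)}`, the `l`-fold concatenation of `W`. -/
def cyclePow (W : List A) (l : ℕ) : List A := (List.replicate l W).flatten

/-- `R` is a minimal set of zero relations generating `I_N` (so `A_N` is monomial). -/
def MinGen (s t : A → V) (Zi : List A → Prop) (N : Set A) (R : Set (List A)) : Prop :=
  (∀ r ∈ R, PathIn s t N r ∧ Zi r) ∧
  (∀ p, PathIn s t N p → (Zi p ↔ ∃ r ∈ R, r <:+: p)) ∧
  (∀ r ∈ R, ∀ r' ∈ R, r <:+: r' → r = r')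

/-- `r` is a quadratic junction relation `ω_a^{l_a} ω_b^0` with `a, b ∈ (Q_N)₁`. -/
def IsJuncRel (ω : A → List A) (N : Set A) (r : List A) : Prop :=
  ∃ a ∈ N, ∃ b ∈ N, ∃ x ∈ (ω a).getLast?, ∃ y ∈ (ω b).head?, r = [x, y]

/-- `S_N = R_N \ Ω_N`. -/
def SRel (ω : A → List A) (N : Set A) (R : Set (List A)) : Set (List A) :=
  {r ∈ R | ¬ IsJuncRel ω N r}

/-- The order `≤_f` on arrows given by position along `W = ω(N)`. -/
def leF (W : List A) (α β : A) : Prop :=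
  ∃ u u' : List A, W = u ++ α :: u' ∧ β ∈ α :: u'

/-- The order `≤_s` on relations: comparison of first arrows. -/
def leS (W : List A) (u v : List A) : Prop :=
  ∃ x ∈ u.head?, ∃ y ∈ v.head?, leF W x y

/-- `ss = [s_1, …, s_k]` enumerates `S` in strictly increasing `≤_s` order. -/
def SEnum (W : List A) (S : Set (List A)) (ss : List (List A)) : Prop :=
  ss.Nodup ∧ (∀ r, r ∈ ss ↔ r ∈ S) ∧ ss.Chain' (fun u v => leS W u v ∧ u ≠ v)

/-- `m` is one of the paths `m_i`, `0 ≤ i ≤ k`, of the definition of `S_N^*`.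
Note that `ω_n^{l_n} ω_0^0 ∈ I_N` is expressed by `¬ JunctionOK s t Zi W W`. -/
def IsMi (s t : A → V) (Zi : List A → Prop) (W : List A)
    (ss : List (List A)) (m : List A) : Prop :=
  -- case `0 < i < k`
  (∃ p ∈ ss.zip ss.tail, ∃ u v v' : List A, ∃ x ∈ p.1.head?, ∃ y ∈ p.2.head?,
      W = u ++ [x] ++ v ++ [y] ++ v' ∧ m = v ++ p.2.dropLast) ∨
  -- case `i = 0`, `ω_n^{l_n} ω_0^0 ∈ I_N`
  (¬ JunctionOK s t Zi W W ∧
    ∃ s1 ∈ ss.head?, ∃ u z : List A, W = u ++ s1 ++ z ∧ m = u ++ s1.dropLast) ∨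
  -- case `i = k`, `ω_n^{l_n} ω_0^0 ∈ I_N`
  (¬ JunctionOK s t Zi W W ∧
    ∃ sk ∈ ss.getLast?, ∃ v z : List A, W = z ++ sk ++ v ∧ m = sk.tail ++ v) ∨
  -- case `i ∈ {0, k}`, `ω_n^{l_n} ω_0^0 ∉ I_N`
  (JunctionOK s t Zi W W ∧
    ∃ s1 ∈ ss.head?, ∃ sk ∈ ss.getLast?, ∃ u v z z' : List A,
      ∃ x ∈ s1.head?, ∃ y ∈ sk.head?,
      W = u ++ [x] ++ z ∧ W = z' ++ [y] ++ v ∧ m = v ++ u ++ s1.dropLast)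

/-- `r` is an `ω`-relation: a zero relation of length greater than two which is the
unique element of `I` dividing it. -/
def IsOmegaRel (s t : A → V) (Zi : List A → Prop) (r : List A) : Prop :=
  IsPath s t r ∧ Zi r ∧ 3 ≤ r.length ∧ ∀ r' : List A, Zi r' → r' <:+: r → r' = r

def InteriorDegreeOne (s t : A → V) (p : List A) : Prop :=
  ∀ x ∈ p.dropLast, (∃! b : A, s b = t x) ∧ (∃! b : A, t b = t x)

theorem mem_dropLast_of_pair_infix {x c : A} {p : List A} (h : [x, c] <:+: p) :
    x ∈ p.dropLast := by
  obtain ⟨l₁, l₂, rfl⟩ := h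
  simp

theorem rel_of_pair_infix {R : A → A → Prop} {x c : A} {p : List A} (hp : p.IsChain R)
    (h : [x, c] <:+: p) : R x c :=
  List.isChain_pair.1 (hp.infix h)

section Phi

variable {s t : A → V}

theorem InteriorDegreeOne.succ_eq {p : List A} (hp : InteriorDegreeOne s t p) {x c y : A}
    (hxc : [x, c] <:+: p) (hc : s c = t x) (hy : s y = t x) : y = c :=
  (hp x (mem_dropLast_of_pair_infix hxc)).1.unique hy hc

theorem InteriorDegreeOne.pred_eq {p : List A} (hp : InteriorDegreeOne s t p) {d a x : A}
    (hda : [d, a] <:+: p) (hx : t x = t d) : x = d :=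
  (hp d (mem_dropLast_of_pair_infix hda)).2.unique hx rfl

theorem prefix_or_prefix_of_interiorDegreeOne {a : A} {u v u' v' : List A}
    (hp : (u ++ a :: v).IsChain (fun a b => t a = s b))
    (hp₁ : InteriorDegreeOne s t (u ++ a :: v))
    (hq : (u' ++ a :: v').IsChain (fun a b => t a = s b)) :
    v <+: v' ∨ v' <+: v := by
  induction v generalizing a u u' v' with
  | nil => exact Or.inl List.nil_prefix
  | cons c v ih =>
    cases v' with
    | nil => exact Or.inr List.nil_prefix
    | cons c' v' =>
      have hac : [a, c] <:+: u ++ a :: c :: v := ⟨u, v, by simp⟩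
      have hac' : [a, c'] <:+: u' ++ a :: c' :: v' := ⟨u', v', by simp⟩
      obtain rfl : c = c' := (hp₁.succ_eq hac (rel_of_pair_infix hp hac).symm
        (rel_of_pair_infix hq hac').symm).symm
      have := ih (u := u ++ [a]) (u' := u' ++ [a]) (v' := v') (by simpa using hp)
        (by simpa using hp₁) (by simpa using hq)
      exact this.imp (List.prefix_cons_inj _).2 (List.prefix_cons_inj _).2

theorem suffix_or_suffix_of_interiorDegreeOne {a : A} {u v u' v' : List A}
    (hp : (u ++ a :: v).IsChain (fun a b => t a = s b))
    (hp₁ : InteriorDegreeOne s t (u ++ a :: v))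
    (hq : (u' ++ a :: v').IsChain (fun a b => t a = s b)) :
    u <:+ u' ∨ u' <:+ u := by
  induction u using List.reverseRecOn generalizing a v u' v' with
  | nil => exact Or.inl List.nil_suffix
  | append_singleton u d ih =>
    rcases List.eq_nil_or_concat u' with rfl | ⟨u', d', rfl⟩
    · exact Or.inr List.nil_suffix
    have hda : [d, a] <:+: u ++ [d] ++ a :: v := ⟨u, v, by simp⟩
    have hda' : [d', a] <:+: u'.concat d' ++ a :: v' := ⟨u', v', by simp⟩
    obtain rfl : d = d' := (hp₁.pred_eq hda
      ((rel_of_pair_infix hq hda').trans (rel_of_pair_infix hp hda).symm)).symm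
    have := ih (a := d) (v := a :: v) (u' := u') (v' := a :: v') (by simpa using hp)
      (by simpa using hp₁) (by simpa using hq)
    refine this.imp (fun ⟨w, hw⟩ => ⟨w, ?_⟩) (fun ⟨w, hw⟩ => ⟨w, ?_⟩) <;> simp [← hw]

theorem splice_mem_phi {a : A} {u v u' v' : List A} (hp : u ++ a :: v ∈ Phi s t a)
    (hq : u' ++ a :: v' ∈ Phi s t a) : u ++ a :: v' ∈ Phi s t a := by
  refine ⟨⟨by simp, ?_⟩, ⟨u, v', by simp⟩, ?_⟩
  · have hp₂ := List.isChain_append.1 hp.1.2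
    have hq₂ := List.isChain_append.1 hq.1.2
    exact List.isChain_append.2
      ⟨hp₂.1, hq₂.2.1, fun x hx y hy => hp₂.2.2 x hx y (by simpa using hy)⟩
  · intro x hx
    rw [List.dropLast_append_cons, List.mem_append] at hx
    rcases hx with hx | hx
    · exact hp.2.2 x (by simp [hx])
    · exact hq.2.2 x (by simp [hx])

theorem eq_of_isLongest_phi {a b : A} {p q : List A} (hp : p ∈ Phi s t a)
    (hpl : ∀ r ∈ Phi s t a, r.length ≤ p.length) (hq : q ∈ Phi s t b)
    (hql : ∀ r ∈ Phi s t b, r.length ≤ q.length) (hb : b ∈ p) : p = q := by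
  obtain ⟨u, v, rfl⟩ := List.append_of_mem hb
  obtain ⟨u', v', rfl⟩ := List.append_of_mem ((List.singleton_infix_iff _ _).1 hq.2.1)
  have hpb : u ++ b :: v ∈ Phi s t b := ⟨hp.1, ⟨u, v, by simp⟩, hp.2.2⟩
  have hu_len := hql _ (splice_mem_phi hpb hq)
  have hv_len := hql _ (splice_mem_phi hq hpb)
  simp only [List.length_append, List.length_cons] at hu_len hv_len
  obtain ⟨w, rfl⟩ : u <:+ u' :=
    (suffix_or_suffix_of_interiorDegreeOne hp.1.2 hp.2.2 hq.1.2).elim id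
      fun h => h.eq_of_length_le (by omega) ▸ List.suffix_refl u
  obtain ⟨w', rfl⟩ : v <+: v' :=
    (prefix_or_prefix_of_interiorDegreeOne hp.1.2 hp.2.2 hq.1.2).elim id
      fun h => h.eq_of_length_le (by omega) ▸ List.prefix_refl v
  have hinf : u ++ b :: v <:+: w ++ u ++ b :: (v ++ w') := ⟨w, w', by simp⟩
  exact hinf.eq_of_length_le (hpl _ ⟨hq.1, hp.2.1.trans hinf, hq.2.2⟩)

theorem mem_getLast?_of_succ_not_mem {a x y : A} {p : List A} (hp : p ∈ Phi s t a)
    (hx : x ∈ p) (hxy : t x = s y) (hy : y ∉ p) : x ∈ p.getLast? := by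
  obtain ⟨u, v, rfl⟩ := List.append_of_mem hx
  cases v with
  | nil => simp
  | cons c v =>
    have hxc : [x, c] <:+: u ++ x :: c :: v := ⟨u, v, by simp⟩
    have hp₁ : InteriorDegreeOne s t _ := hp.2.2
    refine absurd ?_ hy
    rw [hp₁.succ_eq hxc (rel_of_pair_infix hp.1.2 hxc).symm hxy.symm]
    simp

theorem mem_head?_of_pred_not_mem {a x y : A} {p : List A} (hp : p ∈ Phi s t a)
    (hy : y ∈ p) (hxy : t x = s y) (hx : x ∉ p) : y ∈ p.head? := by
  obtain ⟨u, v, rfl⟩ := List.append_of_mem hy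
  rcases List.eq_nil_or_concat u with rfl | ⟨u, d, rfl⟩
  · simp
  have hdy : [d, y] <:+: u.concat d ++ y :: v := ⟨u, v, by simp⟩
  have hp₁ : InteriorDegreeOne s t _ := hp.2.2
  refine absurd ?_ hx
  rw [hp₁.pred_eq hdy (hxy.trans (rel_of_pair_infix hp.1.2 hdy).symm)]
  simp

end Phi

section Components

variable {s t : A → V} {Zi : List A → Prop} {ω : A → List A}

theorem radj_of_junction (hω : OmegaSpec s t ω) {x y : A} (hxy : t x = s y)
    (hnz : ¬ Zi [x, y]) : RAdj s t Zi ω x y := by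
  by_cases hcyc : IsCyclicQuiver s t
  · obtain ⟨p, -, -, -, -, hp⟩ := hω.1 hcyc
    exact Or.inl ((hp x).trans (hp y).symm)
  obtain ⟨hωx, hωx_max⟩ := hω.2 hcyc x
  obtain ⟨hωy, hωy_max⟩ := hω.2 hcyc y
  by_cases hyx : y ∈ ω x
  · exact Or.inl (eq_of_isLongest_phi hωx hωx_max hωy hωy_max hyx)
  by_cases hxy' : x ∈ ω y
  · exact Or.inl (eq_of_isLongest_phi hωy hωy_max hωx hωx_max hxy').symm
  by_cases he : ω x = ω y
  · exact Or.inl he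
  have hx := (List.singleton_infix_iff _ _).1 hωx.2.1
  have hy := (List.singleton_infix_iff _ _).1 hωy.2.1
  exact Or.inr (Or.inl ⟨he, x, mem_getLast?_of_succ_not_mem hωx hx hxy hyx,
    y, mem_head?_of_pred_not_mem hωy hy hxy hxy', hxy, hnz⟩)

instance : Std.Symm (RAdj s t Zi ω) where
  symm _ _ := by
    rintro (h | h | h)
    · exact Or.inl h.symm
    · exact Or.inr (Or.inr h)
    · exact Or.inr (Or.inl h)

theorem SameComp.symm {a b : A} (h : SameComp s t Zi ω a b) : SameComp s t Zi ω b a :=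
  Std.Symm.symm (r := Relation.ReflTransGen (RAdj s t Zi ω)) _ _ h

theorem sameComp_of_mem (hω : OmegaSpec s t ω) (hZ : ZeroClosed Zi) {m : List A}
    (hm : IsPath s t m) (hnz : ¬ Zi m) {x y : A} (hx : x ∈ m) (hy : y ∈ m) :
    SameComp s t Zi ω x y := by
  have hchain : m.IsChain (RAdj s t Zi ω) :=
    List.isChain_iff_forall_rel_of_append_cons_cons.2 fun a b l₁ l₂ h =>
      radj_of_junction hω (List.isChain_iff_forall_rel_of_append_cons_cons.1 hm.2 h)
        fun hab => hnz (hZ _ _ hab ⟨l₁, l₂, by simp [h]⟩)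
  have hhead : ∀ z ∈ m, SameComp s t Zi ω (m.head hm.1) z :=
    hchain.induction _ _ (fun _ _ hr hz => hz.tail hr) fun _ => .refl
  exact (hhead x hx).symm.trans (hhead y hy)

theorem MaxPathIn.of_comp (hω : OmegaSpec s t ω) (hZ : ZeroClosed Zi) {a : A} {m : List A}
    (hm : MaxPathIn s t Zi {b | SameComp s t Zi ω a b} m) : MaxPathIn s t Zi Set.univ m := by
  obtain ⟨⟨hpath, hmem⟩, hnz, hright, hleft⟩ := hm
  refine ⟨⟨hpath, fun _ _ => trivial⟩, hnz, ?_, ?_⟩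
  · rintro α - ⟨x, hx, hxα⟩
    by_cases hzi : Zi [x, α]
    · obtain ⟨l, rfl⟩ := List.getLast?_eq_some_iff.1 hx
      exact hZ _ _ hzi ⟨l, [], by simp⟩
    · exact hright α ((hmem x (List.mem_of_mem_getLast? hx)).tail
        (radj_of_junction hω hxα hzi)) ⟨x, hx, hxα⟩
  · rintro α - ⟨x, hx, hαx⟩
    by_cases hzi : Zi [α, x]
    · obtain ⟨l, rfl⟩ := List.head?_eq_some_iff.1 hx
      exact hZ _ _ hzi ⟨[], l, by simp⟩
    · exact hleft α ((hmem x (List.mem_of_mem_head? hx)).trans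
        (SameComp.symm (.single (radj_of_junction hω hαx hzi)))) ⟨x, hx, hαx⟩

theorem MaxPathIn.to_comp (hω : OmegaSpec s t ω) (hZ : ZeroClosed Zi) {m : List A} {c : A}
    (hm : MaxPathIn s t Zi Set.univ m) (hc : c ∈ m) :
    MaxPathIn s t Zi {b | SameComp s t Zi ω c b} m :=
  ⟨⟨hm.1.1, fun _ hx => sameComp_of_mem hω hZ hm.1.1 hm.2.1 hc hx⟩, hm.2.1,
    fun α _ => hm.2.2.1 α trivial, fun α _ => hm.2.2.2 α trivial⟩

end Components

theorem stmt_7_general (s t : A → V) (Zi : List A → Prop)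
    (ω : A → List A) (hω : OmegaSpec s t ω)
    (hZ : ZeroClosed Zi) :
    UMPin s t Zi Set.univ ↔ ∀ N : Set A, IsComp s t Zi ω N → UMPin s t Zi N := by
  constructor
  · rintro h N ⟨a, rfl⟩ m m' hm hm'
    exact h m m' (hm.of_comp hω hZ) (hm'.of_comp hω hZ)
  · rintro h m m' hm hm' ⟨c, hcm, hcm'⟩
    exact h _ ⟨c, rfl⟩ m m' (hm.to_comp hω hZ hcm) (hm'.to_comp hω hZ hcm') ⟨c, hcm, hcm'⟩

/-- `A` is a UMP algebra iff `A_N` is a UMP algebra for every weakly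
connected component `N` of the ramifications graph `G_{Q,I}`. -/
theorem stmt_7 [Fintype V] [Fintype A] (s t : A → V) (Zi : List A → Prop)
    (ω : A → List A) (hω : OmegaSpec s t ω)
    (hZ : ZeroClosed Zi) (hadm : Admissible s t Zi) :
    UMPin s t Zi Set.univ ↔ ∀ N : Set A, IsComp s t Zi ω N → UMPin s t Zi N :=
  stmt_7_general s t Zi ω hω hZ

end UMPPaper
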